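/- arXiv:0902.0585 — 5 statements merged into one kernel-verified Lean document; each statement's English description precedes it below -/
import Mathlib

section
/- The logistic tail distribution function F*(x) = 1/(1+e^x) is a fixed point of the operator T defined by (TF)(x) = exp(-∫_{-x}^{∞} F(t) dt); that is, for all real x, exp(-∫_{-x}^{∞} 1/(1+e^t) dt) = 1/(1+e^x). -/
open MeasureTheory Set Filter

/-- The logistic tail distribution function. -/
noncomputable def Fstar (x : ℝ) : ℝ := 1 / (1 + Real.exp x)

/-- The BP operator `T`: `(TF)(x) = exp (-∫_{-x}^∞ F)`, with the convention `exp (-∞) = 0`. -/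
noncomputable def Tmap (F : ℝ → ℝ) (x : ℝ) : ℝ :=
  if (∫⁻ u in Ioi (-x), ENNReal.ofReal (F u)) = ⊤ then 0
  else Real.exp (-((∫⁻ u in Ioi (-x), ENNReal.ofReal (F u)).toReal))

/-- The hat transform of a tail distribution function. -/
noncomputable def hatT (F : ℝ → ℝ) (x : ℝ) : ℝ := x + Real.log (F x / (1 - F x))

/-! An antiderivative of `F*` is `G t = -log (1 + e⁻ᵗ)`, which tends to `0` at `+∞`, so
`∫_{-x}^∞ F* = -G (-x) = log (1 + eˣ)` is finite and `T F* x = 1 / (1 + eˣ)`. -/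

section Tmap

variable {F G : ℝ → ℝ} {a x L : ℝ}

theorem lintegral_Ioi_ofReal_eq_of_hasDerivAt (hG : ∀ t ∈ Ici a, HasDerivAt G (F t) t)
    (hF : ∀ t ∈ Ioi a, 0 ≤ F t) (hlim : Tendsto G atTop (nhds L)) :
    ∫⁻ u in Ioi a, ENNReal.ofReal (F u) = ENNReal.ofReal (L - G a) := by
  rw [← ofReal_integral_eq_lintegral_ofReal (integrableOn_Ioi_deriv_of_nonneg' hG hF hlim)
    ((ae_restrict_iff' measurableSet_Ioi).mpr (ae_of_all _ hF)),
    integral_Ioi_of_hasDerivAt_of_nonneg' hG hF hlim]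

theorem Tmap_eq_exp_of_hasDerivAt (hG : ∀ t ∈ Ici (-x), HasDerivAt G (F t) t)
    (hF : ∀ t ∈ Ioi (-x), 0 ≤ F t) (hlim : Tendsto G atTop (nhds L)) :
    Tmap F x = Real.exp (G (-x) - L) := by
  have hnonneg : 0 ≤ L - G (-x) := by
    rw [← integral_Ioi_of_hasDerivAt_of_nonneg' hG hF hlim]
    exact setIntegral_nonneg measurableSet_Ioi hF
  rw [Tmap, lintegral_Ioi_ofReal_eq_of_hasDerivAt hG hF hlim, if_neg ENNReal.ofReal_ne_top,
    ENNReal.toReal_ofReal hnonneg, neg_sub]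

end Tmap

theorem Fstar_nonneg (t : ℝ) : 0 ≤ Fstar t := by
  unfold Fstar
  positivity

theorem hasDerivAt_neg_log_one_add_exp_neg (t : ℝ) :
    HasDerivAt (fun s => -Real.log (1 + Real.exp (-s))) (Fstar t) t := by
  have hinner := ((Real.hasDerivAt_exp (-t)).comp t (hasDerivAt_neg t)).const_add 1
  have hpos : (0 : ℝ) < 1 + Real.exp (-t) := by positivity
  refine (hinner.log hpos.ne').neg.congr_deriv ?_
  simp only [Fstar, Function.comp_apply, Real.exp_neg]
  field_simp
  ring

theorem tendsto_neg_log_one_add_exp_neg_atTop :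
    Tendsto (fun s => -Real.log (1 + Real.exp (-s))) atTop (nhds 0) := by
  have hexp : Tendsto (fun s : ℝ => 1 + Real.exp (-s)) atTop (nhds 1) := by
    simpa using (Real.tendsto_exp_comp_nhds_zero.mpr tendsto_neg_atTop_atBot).const_add 1
  simpa using ((Real.continuousAt_log one_ne_zero).tendsto.comp hexp).neg

theorem logistic_fixed_point : ∀ x : ℝ, Tmap Fstar x = Fstar x := by
  intro x
  rw [Tmap_eq_exp_of_hasDerivAt (fun t _ => hasDerivAt_neg_log_one_add_exp_neg t)
    (fun t _ => Fstar_nonneg t) tendsto_neg_log_one_add_exp_neg_atTop,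
    sub_zero, neg_neg, Real.exp_neg, Real.exp_log (by positivity), Fstar, one_div]
end

section
/- Weak contraction of T on the transform: let F : ℝ → (0,1) be a non-increasing measurable function such that F̂(x) = x + ln(F(x)/(1-F(x))) is bounded, with m = inf F̂ and M = sup F̂. Then TF takes values in (0,1), its transform 𝑇𝐹̂ is bounded, and -M ≤ inf 𝑇𝐹̂ ≤ sup 𝑇𝐹̂ ≤ -m, where (TF)(x) = exp(-∫_{-x}^{∞} F(u) du). -/
open MeasureTheory Set Filter

/-!
Since `t ↦ log (t / (1 - t))` is increasing on `(0, 1)` and sends `Fstar y` to `-y`, the bounds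
`m ≤ hatT F ≤ M` say exactly that `Fstar (· - m) ≤ F ≤ Fstar (· - M)`. The operator `T` reverses
the pointwise order and maps `Fstar (· - c)` to `Fstar (· + c)`, because
`∫_{-x}^∞ Fstar (u - c) du = log (1 + e^(x + c))`. Hence `Fstar (· + M) ≤ T F ≤ Fstar (· + m)`,
which is `-M ≤ hatT (T F) ≤ -m`.
-/

namespace WeakContraction

open Real

lemma Fstar_pos (x : ℝ) : 0 < Fstar x := by
  unfold Fstar; positivity

lemma Fstar_lt_one (x : ℝ) : Fstar x < 1 := by
  unfold Fstar
  rw [div_lt_one (by positivity)]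
  linarith [exp_pos x]

lemma Fstar_eq_exp_neg_div (y : ℝ) : Fstar y = exp (-y) / (1 + exp (-y)) := by
  rw [Fstar, exp_neg]
  field_simp
  ring

lemma log_Fstar_div_one_sub_Fstar (y : ℝ) : log (Fstar y / (1 - Fstar y)) = -y := by
  have : Fstar y / (1 - Fstar y) = exp (-y) := by
    rw [Fstar, exp_neg]
    field_simp
    ring
  rw [this, log_exp]

lemma strictMonoOn_log_div_one_sub :
    StrictMonoOn (fun t : ℝ => log (t / (1 - t))) (Ioo 0 1) := by
  rintro s ⟨hs0, hs1⟩ t ⟨ht0, ht1⟩ hst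
  have hs : 0 < 1 - s := by linarith
  have ht : 0 < 1 - t := by linarith
  refine log_lt_log (by positivity) ?_
  rw [div_lt_div_iff₀ hs ht]
  nlinarith

lemma hatT_le_iff {G : ℝ → ℝ} {x : ℝ} (hG : G x ∈ Ioo 0 1) (c : ℝ) :
    hatT G x ≤ c ↔ G x ≤ Fstar (x - c) := by
  rw [hatT, ← le_sub_iff_add_le', ← neg_sub x, ← log_Fstar_div_one_sub_Fstar (x - c)]
  exact strictMonoOn_log_div_one_sub.le_iff_le hG ⟨Fstar_pos _, Fstar_lt_one _⟩

lemma le_hatT_iff {G : ℝ → ℝ} {x : ℝ} (hG : G x ∈ Ioo 0 1) (c : ℝ) :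
    c ≤ hatT G x ↔ Fstar (x - c) ≤ G x := by
  rw [hatT, ← sub_le_iff_le_add', ← neg_sub x, ← log_Fstar_div_one_sub_Fstar (x - c)]
  exact strictMonoOn_log_div_one_sub.le_iff_le ⟨Fstar_pos _, Fstar_lt_one _⟩ hG

lemma hasDerivAt_neg_log_one_add_exp_sub (c v : ℝ) :
    HasDerivAt (fun v => -log (1 + exp (c - v))) (Fstar (v - c)) v := by
  have h := ((((hasDerivAt_id v).const_sub c).exp).const_add 1).log (by positivity)
  refine h.neg.congr_deriv ?_
  rw [Fstar_eq_exp_neg_div, neg_sub, id]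
  ring

lemma tendsto_neg_log_one_add_exp_sub (c : ℝ) :
    Tendsto (fun v => -log (1 + exp (c - v))) atTop (nhds 0) := by
  have hexp : Tendsto (fun v => exp (c - v)) atTop (nhds 0) :=
    tendsto_exp_atBot.comp (tendsto_atBot_add_const_left _ c tendsto_neg_atTop_atBot)
  have hlog := (continuousAt_log one_ne_zero).tendsto.comp (by simpa using hexp.const_add 1)
  simpa using hlog.neg

lemma lintegral_Fstar_sub (a c : ℝ) :
    ∫⁻ u in Ioi a, ENNReal.ofReal (Fstar (u - c)) = ENNReal.ofReal (log (1 + exp (c - a))) := by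
  have hderiv : ∀ u ∈ Ici a, HasDerivAt (fun v => -log (1 + exp (c - v))) (Fstar (u - c)) u :=
    fun u _ => hasDerivAt_neg_log_one_add_exp_sub c u
  have hnonneg : ∀ u ∈ Ioi a, 0 ≤ Fstar (u - c) := fun u _ => (Fstar_pos _).le
  rw [← ofReal_integral_eq_lintegral_ofReal
      (integrableOn_Ioi_deriv_of_nonneg' hderiv hnonneg (tendsto_neg_log_one_add_exp_sub c))
      (ae_of_all _ fun u => (Fstar_pos _).le),
    integral_Ioi_of_hasDerivAt_of_nonneg' hderiv hnonneg (tendsto_neg_log_one_add_exp_sub c),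
    zero_sub, neg_neg]

lemma Tmap_Fstar_sub (c x : ℝ) : Tmap (fun u => Fstar (u - c)) x = Fstar (x + c) := by
  have hlog : 0 ≤ log (1 + exp (c + x)) := log_nonneg (by linarith [exp_pos (c + x)])
  rw [Tmap, lintegral_Fstar_sub, if_neg ENNReal.ofReal_ne_top, sub_neg_eq_add,
    ENNReal.toReal_ofReal hlog, exp_neg, exp_log (by positivity), add_comm c, Fstar, one_div]

lemma Tmap_le_Tmap {F G : ℝ → ℝ} {x : ℝ} (hFG : ∀ u, F u ≤ G u)
    (hG : ∫⁻ u in Ioi (-x), ENNReal.ofReal (G u) ≠ ⊤) : Tmap G x ≤ Tmap F x := by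
  have hle : ∫⁻ u in Ioi (-x), ENNReal.ofReal (F u) ≤ ∫⁻ u in Ioi (-x), ENNReal.ofReal (G u) :=
    lintegral_mono fun u => ENNReal.ofReal_le_ofReal (hFG u)
  rw [Tmap, Tmap, if_neg hG, if_neg (ne_top_of_le_ne_top hG hle)]
  exact exp_le_exp.mpr (neg_le_neg (ENNReal.toReal_mono hG hle))

lemma Tmap_mem_Icc_of_le_of_le {F : ℝ → ℝ} {m M : ℝ} (hlower : ∀ u, Fstar (u - m) ≤ F u)
    (hupper : ∀ u, F u ≤ Fstar (u - M)) (x : ℝ) :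
    Tmap F x ∈ Icc (Fstar (x + M)) (Fstar (x + m)) := by
  have hfin : ∀ c, ∫⁻ u in Ioi (-x), ENNReal.ofReal (Fstar (u - c)) ≠ ⊤ := fun c => by
    rw [lintegral_Fstar_sub]; exact ENNReal.ofReal_ne_top
  have hFfin : ∫⁻ u in Ioi (-x), ENNReal.ofReal (F u) ≠ ⊤ :=
    ne_top_of_le_ne_top (hfin M) (lintegral_mono fun u => ENNReal.ofReal_le_ofReal (hupper u))
  rw [← Tmap_Fstar_sub M, ← Tmap_Fstar_sub m]
  exact ⟨Tmap_le_Tmap hupper (hfin M), Tmap_le_Tmap hlower hFfin⟩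

end WeakContraction

open WeakContraction

theorem weak_contraction_general (F : ℝ → ℝ)
    (hr : ∀ x, F x ∈ Ioo (0:ℝ) 1)
    (hbdd : BddAbove (Set.range (hatT F)) ∧ BddBelow (Set.range (hatT F))) :
    (∀ x, Tmap F x ∈ Ioo (0:ℝ) 1) ∧
    BddAbove (Set.range (hatT (Tmap F))) ∧ BddBelow (Set.range (hatT (Tmap F))) ∧
    (∀ x, -sSup (Set.range (hatT F)) ≤ hatT (Tmap F) x ∧
      hatT (Tmap F) x ≤ -sInf (Set.range (hatT F))) := by
  obtain ⟨hbddAbove, hbddBelow⟩ := hbdd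
  set m := sInf (Set.range (hatT F))
  set M := sSup (Set.range (hatT F))
  have hT : ∀ x, Tmap F x ∈ Icc (Fstar (x + M)) (Fstar (x + m)) :=
    Tmap_mem_Icc_of_le_of_le (fun u => (le_hatT_iff (hr u) m).1 (csInf_le hbddBelow ⟨u, rfl⟩))
      (fun u => (hatT_le_iff (hr u) M).1 (le_csSup hbddAbove ⟨u, rfl⟩))
  have hTF : ∀ x, Tmap F x ∈ Ioo (0:ℝ) 1 := fun x =>
    ⟨(Fstar_pos _).trans_le (hT x).1, (hT x).2.trans_lt (Fstar_lt_one _)⟩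
  have hhat : ∀ x, -M ≤ hatT (Tmap F) x ∧ hatT (Tmap F) x ≤ -m := fun x =>
    ⟨(le_hatT_iff (hTF x) _).2 (by rw [sub_neg_eq_add]; exact (hT x).1),
      (hatT_le_iff (hTF x) _).2 (by rw [sub_neg_eq_add]; exact (hT x).2)⟩
  exact ⟨hTF, ⟨-m, forall_mem_range.2 fun x => (hhat x).2⟩,
    ⟨-M, forall_mem_range.2 fun x => (hhat x).1⟩, hhat⟩

theorem weak_contraction (F : ℝ → ℝ) (hmeas : Measurable F) (hanti : Antitone F)
    (hr : ∀ x, F x ∈ Ioo (0:ℝ) 1)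
    (hbdd : BddAbove (Set.range (hatT F)) ∧ BddBelow (Set.range (hatT F))) :
    (∀ x, Tmap F x ∈ Ioo (0:ℝ) 1) ∧
    BddAbove (Set.range (hatT (Tmap F))) ∧ BddBelow (Set.range (hatT (Tmap F))) ∧
    (∀ x, -sSup (Set.range (hatT F)) ≤ hatT (Tmap F) x ∧
      hatT (Tmap F) x ≤ -sInf (Set.range (hatT F))) :=
  weak_contraction_general F hr hbdd
end

section
/- Strict contraction under T²: if F : ℝ → (0,1) is non-increasing, right-continuous, with F̂(x) = x + ln(F(x)/(1-F(x))) bounded and not constant, then inf_{ℝ} F̂ < inf_{ℝ} (T²F)^ and sup_{ℝ} (T²F)^ < sup_{ℝ} F̂, where (TF)(x) = exp(-∫_{-x}^{∞} F(u) du) and (T²F)^ denotes the transform of T²F. -/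
open MeasureTheory Set Filter

/-!
Write `logistic a` for the logistic tail `x ↦ Fstar (x - a)`, whose hat transform is constantly
`a`. For `G` with values in `(0, 1)`, `m ≤ hatT G` says exactly `logistic m ≤ G`. Since
`∫_{-x}^∞ logistic a = softplus (a + x)`, `T (logistic a) = logistic (-a)`, and `T` reverses the
order, so `T` maps hat bounds `[m, M]` to `[-M, -m]`.

If `hatT F x₀ > m`, monotonicity of `F` bounds `F - logistic m` below by a positive constant on
a short interval left of `x₀`, so `∫_{-x}^∞ (F - logistic m) ≥ c > 0` for all large `x`; this
improves the bound to `hatT (T F) ≤ -m - c` on a half-line. Applying `T` again, for small `y`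
the integral only sees that half-line, while for large `y` the half-line contributes a fixed
positive gap, and either way `hatT (T² F) ≥ m + ε`. The upper bound is symmetric.
-/

open Real Topology

lemma le_setIntegral_Ioi_of_le_on_Ioc {h : ℝ → ℝ} {a b κ : ℝ}
    (hint : IntegrableOn h (Ioi a)) (h0 : ∀ u ∈ Ioi a, 0 ≤ h u) (hκ : ∀ u ∈ Ioc a b, κ ≤ h u)
    (hab : a ≤ b) :
    κ * (b - a) ≤ ∫ u in Ioi a, h u :=
  calc κ * (b - a) ≤ ∫ u in Ioc a b, h u := by
        simpa [volume_real_Ioc_of_le hab] using setIntegral_ge_of_const_le_real measurableSet_Ioc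
          measure_Ioc_lt_top.ne hκ (hint.mono_set Ioc_subset_Ioi_self)
    _ ≤ ∫ u in Ioi a, h u := setIntegral_mono_set hint
        ((ae_restrict_iff' measurableSet_Ioi).2 (ae_of_all _ h0)) Ioc_subset_Ioi_self.eventuallyLE

noncomputable def softplus (z : ℝ) : ℝ := log (1 + exp z)

lemma exp_softplus (z : ℝ) : exp (softplus z) = 1 + exp z :=
  exp_log (by positivity)

lemma softplus_pos (z : ℝ) : 0 < softplus z :=
  log_pos (by linarith [exp_pos z])

lemma softplus_strictMono : StrictMono softplus := fun _ _ h =>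
  log_lt_log (by positivity) (by gcongr)

lemma softplus_add_le (z : ℝ) {c : ℝ} (hc : 0 ≤ c) : softplus (z + c) ≤ softplus z + c := by
  rw [← exp_le_exp, exp_add, exp_softplus, exp_softplus, exp_add]
  nlinarith [one_le_exp hc, exp_pos z]

lemma hasDerivAt_softplus (z : ℝ) : HasDerivAt softplus (sigmoid z) z :=
  (((hasDerivAt_exp z).const_add 1).log (by positivity)).congr_deriv <| by
    rw [sigmoid_def, exp_neg]
    field_simp
    ring

lemma tendsto_softplus_atBot : Tendsto softplus atBot (𝓝 0) := by
  have h : Tendsto (fun z => 1 + exp z) atBot (𝓝 1) := by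
    simpa using tendsto_exp_atBot.const_add 1
  rw [← log_one]
  exact (continuousAt_log one_ne_zero).tendsto.comp h

noncomputable def logistic (a x : ℝ) : ℝ := Fstar (x - a)

lemma logistic_eq_sigmoid (a x : ℝ) : logistic a x = sigmoid (a - x) := by
  simp [logistic, Fstar, sigmoid_def]

lemma logistic_eq_exp (a x : ℝ) : logistic a x = exp (-softplus (x - a)) := by
  rw [logistic, Fstar, exp_neg, exp_softplus, one_div]

lemma logistic_pos (a x : ℝ) : 0 < logistic a x := by
  rw [logistic_eq_sigmoid]
  exact sigmoid_pos _

lemma logistic_strictMono_left (x : ℝ) : StrictMono fun a => logistic a x := fun _ _ h => by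
  simp only [logistic_eq_sigmoid]
  exact sigmoid_lt (by linarith)

lemma logistic_le_logistic_of_le {a b u x : ℝ} (h : a - u ≤ b - x) :
    logistic a u ≤ logistic b x := by
  simp only [logistic_eq_sigmoid]
  exact sigmoid_le h

lemma logistic_hatT {F : ℝ → ℝ} {x : ℝ} (hx : F x ∈ Ioo 0 1) :
    logistic (hatT F x) x = F x := by
  have h0 : F x ≠ 0 := hx.1.ne'
  have h1 : 1 - F x ≠ 0 := (sub_pos.2 hx.2).ne'
  rw [logistic_eq_sigmoid, hatT, add_sub_cancel_left, sigmoid_def, exp_neg,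
    exp_log (div_pos hx.1 (sub_pos.2 hx.2))]
  field_simp
  ring

lemma le_hatT_iff {F : ℝ → ℝ} {a x : ℝ} (hx : F x ∈ Ioo 0 1) :
    a ≤ hatT F x ↔ logistic a x ≤ F x := by
  conv_rhs => rw [← logistic_hatT hx]
  exact (logistic_strictMono_left x).le_iff_le.symm

lemma hatT_le_iff {F : ℝ → ℝ} {a x : ℝ} (hx : F x ∈ Ioo 0 1) :
    hatT F x ≤ a ↔ F x ≤ logistic a x := by
  conv_rhs => rw [← logistic_hatT hx]
  exact (logistic_strictMono_left x).le_iff_le.symm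

lemma hasDerivAt_neg_softplus_sub (a x : ℝ) :
    HasDerivAt (fun u => -softplus (a - u)) (logistic a x) x := by
  have h := ((hasDerivAt_softplus (a - x)).comp x ((hasDerivAt_id x).const_sub a)).fun_neg
  rw [logistic_eq_sigmoid]
  exact h.congr_deriv (by ring)

lemma tendsto_neg_softplus_sub (a : ℝ) : Tendsto (fun u => -softplus (a - u)) atTop (𝓝 0) := by
  simpa [sub_eq_add_neg] using
    (tendsto_softplus_atBot.comp (tendsto_atBot_add_const_left _ a tendsto_neg_atTop_atBot)).neg

lemma integrableOn_logistic (a t : ℝ) : IntegrableOn (logistic a) (Ioi t) :=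
  integrableOn_Ioi_deriv_of_nonneg' (fun x _ => hasDerivAt_neg_softplus_sub a x)
    (fun x _ => (logistic_pos a x).le) (tendsto_neg_softplus_sub a)

lemma integral_logistic (a t : ℝ) : ∫ u in Ioi t, logistic a u = softplus (a - t) := by
  rw [integral_Ioi_of_hasDerivAt_of_nonneg' (fun x _ => hasDerivAt_neg_softplus_sub a x)
    (fun x _ => (logistic_pos a x).le) (tendsto_neg_softplus_sub a)]
  ring

section

variable {G : ℝ → ℝ} {a t x : ℝ}

lemma setIntegral_le_softplus (hG : IntegrableOn G (Ioi t))
    (h : ∀ u ∈ Ioi t, G u ≤ logistic a u) : ∫ u in Ioi t, G u ≤ softplus (a - t) :=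
  integral_logistic a t ▸ setIntegral_mono_on hG (integrableOn_logistic a t) measurableSet_Ioi h

lemma softplus_le_setIntegral (hG : IntegrableOn G (Ioi t))
    (h : ∀ u ∈ Ioi t, logistic a u ≤ G u) : softplus (a - t) ≤ ∫ u in Ioi t, G u :=
  integral_logistic a t ▸ setIntegral_mono_on (integrableOn_logistic a t) hG measurableSet_Ioi h

lemma Tmap_eq_exp (h0 : ∀ u, 0 ≤ G u) (hG : IntegrableOn G (Ioi (-x))) :
    Tmap G x = exp (-∫ u in Ioi (-x), G u) := by
  rw [Tmap, ← ofReal_integral_eq_lintegral_ofReal hG (ae_of_all _ h0),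
    if_neg ENNReal.ofReal_ne_top, ENNReal.toReal_ofReal (integral_nonneg h0)]

lemma Tmap_le_logistic_neg_iff (h0 : ∀ u, 0 ≤ G u) (hG : IntegrableOn G (Ioi (-x))) :
    Tmap G x ≤ logistic (-a) x ↔ softplus (a - -x) ≤ ∫ u in Ioi (-x), G u := by
  rw [Tmap_eq_exp h0 hG, logistic_eq_exp, exp_le_exp, neg_le_neg_iff, sub_neg_eq_add,
    sub_neg_eq_add, add_comm]

lemma logistic_neg_le_Tmap_iff (h0 : ∀ u, 0 ≤ G u) (hG : IntegrableOn G (Ioi (-x))) :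
    logistic (-a) x ≤ Tmap G x ↔ ∫ u in Ioi (-x), G u ≤ softplus (a - -x) := by
  rw [Tmap_eq_exp h0 hG, logistic_eq_exp, exp_le_exp, neg_le_neg_iff, sub_neg_eq_add,
    sub_neg_eq_add, add_comm]

end

structure LogisticBounds (m M : ℝ) (G : ℝ → ℝ) : Prop where
  antitone : Antitone G
  logistic_le : logistic m ≤ G
  le_logistic : G ≤ logistic M

namespace LogisticBounds

variable {m M : ℝ} {G : ℝ → ℝ}

lemma nonneg (hG : LogisticBounds m M G) (x : ℝ) : 0 ≤ G x :=
  (logistic_pos m x).le.trans (hG.logistic_le x)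

lemma integrableOn (hG : LogisticBounds m M G) (t : ℝ) : IntegrableOn G (Ioi t) :=
  (integrableOn_logistic M t).mono' hG.antitone.measurable.aestronglyMeasurable
    (ae_of_all _ fun u => by rw [Real.norm_of_nonneg (hG.nonneg u)]; exact hG.le_logistic u)

lemma Tmap_mem_Ioo (hG : LogisticBounds m M G) (x : ℝ) : Tmap G x ∈ Ioo 0 1 := by
  rw [Tmap_eq_exp hG.nonneg (hG.integrableOn _)]
  refine ⟨exp_pos _, exp_lt_one_iff.2 (neg_lt_zero.2 ((softplus_pos (m - -x)).trans_le ?_))⟩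
  exact softplus_le_setIntegral (hG.integrableOn _) fun u _ => hG.logistic_le u

end LogisticBounds

lemma logisticBounds_Tmap {m M : ℝ} {G : ℝ → ℝ} (hG : LogisticBounds m M G) :
    LogisticBounds (-M) (-m) (Tmap G) where
  antitone x y hxy := by
    rw [Tmap_eq_exp hG.nonneg (hG.integrableOn _), Tmap_eq_exp hG.nonneg (hG.integrableOn _),
      exp_le_exp, neg_le_neg_iff]
    exact setIntegral_mono_set (hG.integrableOn _) (ae_of_all _ hG.nonneg)
      (Ioi_subset_Ioi (neg_le_neg hxy)).eventuallyLE
  logistic_le x := (logistic_neg_le_Tmap_iff hG.nonneg (hG.integrableOn _)).2 <|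
    setIntegral_le_softplus (hG.integrableOn _) fun u _ => hG.le_logistic u
  le_logistic x := (Tmap_le_logistic_neg_iff hG.nonneg (hG.integrableOn _)).2 <|
    softplus_le_setIntegral (hG.integrableOn _) fun u _ => hG.logistic_le u

namespace LogisticBounds

variable {m M : ℝ} {G : ℝ → ℝ}

lemma Tmap_le_logistic_of_gap (hG : LogisticBounds m M G) {c t x : ℝ} (hc : 0 ≤ c)
    (hgap : c ≤ ∫ u in Ioi t, (G u - logistic m u)) (hx : -t ≤ x) :
    Tmap G x ≤ logistic (-m - c) x := by
  have hmono : ∫ u in Ioi t, (G u - logistic m u) ≤ ∫ u in Ioi (-x), (G u - logistic m u) :=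
    setIntegral_mono_set ((hG.integrableOn _).sub (integrableOn_logistic m _))
      (ae_of_all _ fun u => sub_nonneg.2 (hG.logistic_le u))
      (Ioi_subset_Ioi (by linarith)).eventuallyLE
  rw [integral_sub (hG.integrableOn (-x)) (integrableOn_logistic m (-x)),
    integral_logistic m (-x)] at hmono
  rw [← neg_add', Tmap_le_logistic_neg_iff hG.nonneg (hG.integrableOn _), add_sub_right_comm]
  linarith [softplus_add_le (m - -x) hc]

lemma logistic_le_Tmap_of_gap (hG : LogisticBounds m M G) {c t x : ℝ} (hc : 0 ≤ c)
    (hgap : c ≤ ∫ u in Ioi t, (logistic M u - G u)) (hx : -t ≤ x) :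
    logistic (-M + c) x ≤ Tmap G x := by
  have hmono : ∫ u in Ioi t, (logistic M u - G u) ≤ ∫ u in Ioi (-x), (logistic M u - G u) :=
    setIntegral_mono_set ((integrableOn_logistic M _).sub (hG.integrableOn _))
      (ae_of_all _ fun u => sub_nonneg.2 (hG.le_logistic u))
      (Ioi_subset_Ioi (by linarith)).eventuallyLE
  rw [integral_sub (integrableOn_logistic M (-x)) (hG.integrableOn (-x)),
    integral_logistic M (-x)] at hmono
  rw [show -M + c = -(M - c) by ring, logistic_neg_le_Tmap_iff hG.nonneg (hG.integrableOn _),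
    sub_right_comm]
  have h := softplus_add_le (M - -x - c) hc
  rw [sub_add_cancel] at h
  linarith

/-- For `y ≥ -t` the gap that `G` leaves below `logistic M` on `Ioi t` is inherited; for
`y < -t` the tail `Ioi (-y)` lies inside `Ioi t` and the improved bound applies directly. -/
lemma exists_logistic_le_Tmap (hG : LogisticBounds m M G) {c t : ℝ} (hc : 0 < c)
    (ht : ∀ u ∈ Ioi t, G u ≤ logistic (M - c) u) :
    ∃ ε > 0, logistic (-M + ε) ≤ Tmap G := by
  set d := softplus (M - t) - softplus (M - c - t)
  have hd : 0 < d := sub_pos.2 (softplus_strictMono (by linarith))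
  have hgap : d ≤ ∫ u in Ioi t, (logistic M u - G u) := by
    rw [integral_sub (integrableOn_logistic M t) (hG.integrableOn t), integral_logistic]
    linarith [setIntegral_le_softplus (hG.integrableOn t) ht]
  refine ⟨min c d, lt_min hc hd, fun y => ?_⟩
  rcases le_or_gt (-t) y with hy | hy
  · refine ((logistic_strictMono_left y).monotone ?_).trans
      (hG.logistic_le_Tmap_of_gap hd.le hgap hy)
    linarith [min_le_right c d]
  · have h : logistic (-(M - c)) y ≤ Tmap G y :=
      (logistic_neg_le_Tmap_iff hG.nonneg (hG.integrableOn _)).2 <|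
        setIntegral_le_softplus (hG.integrableOn _) fun u hu =>
          ht u (mem_Ioi.2 (by linarith [mem_Ioi.1 hu]))
    refine ((logistic_strictMono_left y).monotone ?_).trans h
    linarith [min_le_left c d]

lemma exists_Tmap_le_logistic (hG : LogisticBounds m M G) {c t : ℝ} (hc : 0 < c)
    (ht : ∀ u ∈ Ioi t, logistic (m + c) u ≤ G u) :
    ∃ ε > 0, Tmap G ≤ logistic (-m - ε) := by
  set d := softplus (m + c - t) - softplus (m - t)
  have hd : 0 < d := sub_pos.2 (softplus_strictMono (by linarith))
  have hgap : d ≤ ∫ u in Ioi t, (G u - logistic m u) := by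
    rw [integral_sub (hG.integrableOn t) (integrableOn_logistic m t), integral_logistic]
    linarith [softplus_le_setIntegral (hG.integrableOn t) ht]
  refine ⟨min c d, lt_min hc hd, fun y => ?_⟩
  rcases le_or_gt (-t) y with hy | hy
  · refine (hG.Tmap_le_logistic_of_gap hd.le hgap hy).trans
      ((logistic_strictMono_left y).monotone ?_)
    linarith [min_le_right c d]
  · have h : Tmap G y ≤ logistic (-(m + c)) y :=
      (Tmap_le_logistic_neg_iff hG.nonneg (hG.integrableOn _)).2 <|
        softplus_le_setIntegral (hG.integrableOn _) fun u hu =>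
          ht u (mem_Ioi.2 (by linarith [mem_Ioi.1 hu]))
    refine h.trans ((logistic_strictMono_left y).monotone ?_)
    linarith [min_le_left c d]

lemma exists_logistic_le_Tmap_Tmap (hG : LogisticBounds m M G) {t : ℝ}
    (hgap : 0 < ∫ u in Ioi t, (G u - logistic m u)) :
    ∃ ε > 0, logistic (m + ε) ≤ Tmap (Tmap G) := by
  simpa only [neg_neg] using (logisticBounds_Tmap hG).exists_logistic_le_Tmap (t := -t) hgap
    fun x hx => hG.Tmap_le_logistic_of_gap hgap.le le_rfl (le_of_lt hx)

lemma exists_Tmap_Tmap_le_logistic (hG : LogisticBounds m M G) {t : ℝ}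
    (hgap : 0 < ∫ u in Ioi t, (logistic M u - G u)) :
    ∃ ε > 0, Tmap (Tmap G) ≤ logistic (M - ε) := by
  simpa only [neg_neg] using (logisticBounds_Tmap hG).exists_Tmap_le_logistic (t := -t) hgap
    fun x hx => hG.logistic_le_Tmap_of_gap hgap.le le_rfl (le_of_lt hx)

lemma exists_pos_setIntegral_sub_logistic (hG : LogisticBounds m M G) {a x₀ : ℝ}
    (hx₀ : logistic a x₀ ≤ G x₀) (ha : m < a) :
    ∃ t, 0 < ∫ u in Ioi t, (G u - logistic m u) := by
  set η := (a - m) / 2 with hη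
  have hκ : 0 < logistic a x₀ - logistic (m + η) x₀ :=
    sub_pos.2 (logistic_strictMono_left x₀ (by linarith))
  refine ⟨x₀ - η, (mul_pos hκ (by linarith)).trans_le <|
    le_setIntegral_Ioi_of_le_on_Ioc ((hG.integrableOn _).sub (integrableOn_logistic m _))
      (b := x₀) (fun u _ => sub_nonneg.2 (hG.logistic_le u)) (fun u hu => ?_) (by linarith)⟩
  have h1 : G x₀ ≤ G u := hG.antitone hu.2
  have h2 : logistic m u ≤ logistic (m + η) x₀ :=
    logistic_le_logistic_of_le (by linarith [hu.1])
  linarith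

lemma exists_pos_setIntegral_logistic_sub (hG : LogisticBounds m M G) {a x₁ : ℝ}
    (hx₁ : G x₁ ≤ logistic a x₁) (ha : a < M) :
    ∃ t, 0 < ∫ u in Ioi t, (logistic M u - G u) := by
  set η := (M - a) / 2 with hη
  have hκ : 0 < logistic (M - η) x₁ - logistic a x₁ :=
    sub_pos.2 (logistic_strictMono_left x₁ (by linarith))
  refine ⟨x₁, (mul_pos hκ (by linarith)).trans_le <|
    le_setIntegral_Ioi_of_le_on_Ioc ((integrableOn_logistic M _).sub (hG.integrableOn _))
      (b := x₁ + η) (fun u _ => sub_nonneg.2 (hG.le_logistic u)) (fun u hu => ?_)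
      (by linarith)⟩
  have h1 : G u ≤ G x₁ := hG.antitone hu.1.le
  have h2 : logistic (M - η) x₁ ≤ logistic M u :=
    logistic_le_logistic_of_le (by linarith [hu.2])
  linarith

end LogisticBounds

theorem strict_contraction_general (F : ℝ → ℝ) (hanti : Antitone F)
    (hr : ∀ x, F x ∈ Ioo (0:ℝ) 1)
    (hbdd : BddAbove (Set.range (hatT F)) ∧ BddBelow (Set.range (hatT F)))
    (hnc : ¬ ∃ c : ℝ, ∀ x, hatT F x = c) :
    sInf (Set.range (hatT F)) < sInf (Set.range (hatT (Tmap (Tmap F)))) ∧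
    sSup (Set.range (hatT (Tmap (Tmap F)))) < sSup (Set.range (hatT F)) := by
  set m := sInf (range (hatT F))
  set M := sSup (range (hatT F))
  have hm : ∀ x, m ≤ hatT F x := fun x => csInf_le hbdd.2 ⟨x, rfl⟩
  have hM : ∀ x, hatT F x ≤ M := fun x => le_csSup hbdd.1 ⟨x, rfl⟩
  have hF : LogisticBounds m M F :=
    ⟨hanti, fun x => (le_hatT_iff (hr x)).1 (hm x), fun x => (hatT_le_iff (hr x)).1 (hM x)⟩
  obtain ⟨x₀, hx₀⟩ : ∃ x, m < hatT F x := by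
    by_contra! h
    exact hnc ⟨m, fun x => (h x).antisymm (hm x)⟩
  obtain ⟨x₁, hx₁⟩ : ∃ x, hatT F x < M := by
    by_contra! h
    exact hnc ⟨M, fun x => (hM x).antisymm (h x)⟩
  obtain ⟨t₀, hgap₀⟩ :=
    hF.exists_pos_setIntegral_sub_logistic (logistic_hatT (hr x₀)).le hx₀
  obtain ⟨t₁, hgap₁⟩ :=
    hF.exists_pos_setIntegral_logistic_sub (logistic_hatT (hr x₁)).ge hx₁
  obtain ⟨ε, hε, hlow⟩ := hF.exists_logistic_le_Tmap_Tmap hgap₀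
  obtain ⟨ε', hε', hupp⟩ := hF.exists_Tmap_Tmap_le_logistic hgap₁
  have hT2 (y : ℝ) : Tmap (Tmap F) y ∈ Ioo 0 1 := (logisticBounds_Tmap hF).Tmap_mem_Ioo y
  constructor
  · refine (lt_add_of_pos_right m hε).trans_le (le_csInf (range_nonempty _) ?_)
    exact forall_mem_range.2 fun y => (le_hatT_iff (hT2 y)).2 (hlow y)
  · refine (csSup_le (range_nonempty _) ?_).trans_lt (sub_lt_self M hε')
    exact forall_mem_range.2 fun y => (hatT_le_iff (hT2 y)).2 (hupp y)

theorem strict_contraction (F : ℝ → ℝ) (hanti : Antitone F)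
    (hrc : ∀ x, ContinuousWithinAt F (Ici x) x)
    (hr : ∀ x, F x ∈ Ioo (0:ℝ) 1)
    (hbdd : BddAbove (Set.range (hatT F)) ∧ BddBelow (Set.range (hatT F)))
    (hnc : ¬ ∃ c : ℝ, ∀ x, hatT F x = c) :
    sInf (Set.range (hatT F)) < sInf (Set.range (hatT (Tmap (Tmap F)))) ∧
    sSup (Set.range (hatT (Tmap (Tmap F)))) < sSup (Set.range (hatT F)) :=
  strict_contraction_general F hanti hr hbdd hnc
end

section
/- Let F : ℝ → [0,1] be non-increasing, not identically 0, with ∫_0^∞ F(t) dt < ∞. Then the transform of T⁴F, namely x ↦ x + ln(T⁴F(x)/(1 - T⁴F(x))), is bounded on ℝ. Equivalently, there exists M ≥ 0 with θ_{-M}F* ≤ T⁴F ≤ θ_M F*. -/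
open MeasureTheory Set Filter

/-!
Write `T f x = exp (-∫_{-x}^∞ f)`. One application of `T` turns a property of `f` into a
sharper one of `T f`: a positive lower bound for `f` on a left half-line makes `T f` decay
exponentially on the right; decay `f = O(e^{-r x})` gives `1 - T f = O(e^{r x})` on the left,
because `1 - e^{-H} ≤ H`; and `1 - f = O(e^{r x})` gives `∫_{-x}^∞ f ≥ x - O(1)`, hence
`T f = O(e^{-x})` with rate exactly `1`. If moreover `f ≤ 1` has an integrable right tail then
`∫_{-x}^∞ f ≤ x + O(1)`, so `T f ≥ c e^{-x}`, and one more application gives `1 - T f ≥ c' e^{x}`.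

Starting from `F ≥ F x₀ > 0` on `(-∞, x₀]` and `∫_0^∞ F < ∞`, four applications make both
`T⁴F` and `1 - T⁴F` comparable to `e^{-x}` resp. `e^{x}` on the relevant half-lines, and such
two-sided exponential bounds are exactly a sandwich between two translates of `F*`.
-/

open Real
open scoped ENNReal

noncomputable def tailLIntegral (f : ℝ → ℝ) (x : ℝ) : ℝ≥0∞ := ∫⁻ u in Ioi (-x), ENNReal.ofReal (f u)

lemma tailLIntegral_mono (f : ℝ → ℝ) : Monotone (tailLIntegral f) := fun _ _ hxy =>
  lintegral_mono_set (Ioi_subset_Ioi (neg_le_neg hxy))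

lemma Tmap_eq_of_ne_top {f : ℝ → ℝ} {x : ℝ} (h : tailLIntegral f x ≠ ⊤) :
    Tmap f x = exp (-(tailLIntegral f x).toReal) :=
  if_neg h

lemma Tmap_eq_zero_of_eq_top {f : ℝ → ℝ} {x : ℝ} (h : tailLIntegral f x = ⊤) : Tmap f x = 0 :=
  if_pos h

lemma Tmap_nonneg (f : ℝ → ℝ) (x : ℝ) : 0 ≤ Tmap f x := by
  by_cases h : tailLIntegral f x = ⊤
  · rw [Tmap_eq_zero_of_eq_top h]
  · rw [Tmap_eq_of_ne_top h]; positivity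

lemma Tmap_le_exp_neg {f : ℝ → ℝ} {x L : ℝ} (h : ENNReal.ofReal L ≤ tailLIntegral f x) :
    Tmap f x ≤ exp (-L) := by
  by_cases hI : tailLIntegral f x = ⊤
  · rw [Tmap_eq_zero_of_eq_top hI]; positivity
  · rw [Tmap_eq_of_ne_top hI, exp_le_exp, neg_le_neg_iff]
    exact (ENNReal.ofReal_le_iff_le_toReal hI).1 h

lemma Tmap_le_one (f : ℝ → ℝ) (x : ℝ) : Tmap f x ≤ 1 := by
  simpa using Tmap_le_exp_neg (f := f) (x := x) (L := 0) (by simp)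

lemma Tmap_anti (f : ℝ → ℝ) : Antitone (Tmap f) := by
  intro x y hxy
  by_cases hx : tailLIntegral f x = ⊤
  · rw [Tmap_eq_zero_of_eq_top (top_le_iff.1 (hx ▸ tailLIntegral_mono f hxy))]
    exact Tmap_nonneg f x
  · rw [Tmap_eq_of_ne_top hx]
    exact Tmap_le_exp_neg ((ENNReal.ofReal_toReal hx).trans_le (tailLIntegral_mono f hxy))

lemma exp_neg_le_Tmap {f : ℝ → ℝ} {x U : ℝ} (hU : 0 ≤ U)
    (h : tailLIntegral f x ≤ ENNReal.ofReal U) : exp (-U) ≤ Tmap f x := by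
  rw [Tmap_eq_of_ne_top (ne_top_of_le_ne_top ENNReal.ofReal_ne_top h), exp_le_exp, neg_le_neg_iff]
  exact ENNReal.toReal_le_of_le_ofReal hU h

lemma one_sub_Tmap_le {f : ℝ → ℝ} {x U : ℝ} (hU : 0 ≤ U)
    (h : tailLIntegral f x ≤ ENNReal.ofReal U) : 1 - Tmap f x ≤ U := by
  rw [Tmap_eq_of_ne_top (ne_top_of_le_ne_top ENNReal.ofReal_ne_top h)]
  linarith [add_one_le_exp (-(tailLIntegral f x).toReal), ENNReal.toReal_le_of_le_ofReal hU h]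

lemma mul_exp_neg_le_one_sub_Tmap {f : ℝ → ℝ} {x U L : ℝ} (hU : 0 ≤ U)
    (h : tailLIntegral f x ≤ ENNReal.ofReal U) (hL : ENNReal.ofReal L ≤ tailLIntegral f x) :
    L * exp (-U) ≤ 1 - Tmap f x := by
  have hI := ne_top_of_le_ne_top ENNReal.ofReal_ne_top h
  rw [Tmap_eq_of_ne_top hI]
  set H := (tailLIntegral f x).toReal
  have hLH : L ≤ H := (ENNReal.ofReal_le_iff_le_toReal hI).1 hL
  have hHU : H ≤ U := ENNReal.toReal_le_of_le_ofReal hU h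
  have hH : 0 ≤ H := ENNReal.toReal_nonneg
  have key : (H + 1) * exp (-H) ≤ 1 := by
    calc (H + 1) * exp (-H) ≤ exp H * exp (-H) := by gcongr; linarith [add_one_le_exp H]
      _ = 1 := by rw [← exp_add, add_neg_cancel, exp_zero]
  calc L * exp (-U) ≤ H * exp (-U) := by gcongr
    _ ≤ H * exp (-H) := by gcongr
    _ ≤ 1 - exp (-H) := by linarith

lemma lintegral_Ioi_ofReal_mul_exp_neg_mul {C r : ℝ} (hC : 0 ≤ C) (hr : 0 < r) (c : ℝ) :
    ∫⁻ x in Ioi c, ENNReal.ofReal (C * exp (-r * x)) = ENNReal.ofReal (C / r * exp (-r * c)) := by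
  rw [← ofReal_integral_eq_lintegral_ofReal
      ((integrableOn_exp_mul_Ioi (neg_neg_of_pos hr) c).const_mul C)
      (ae_of_all _ fun x => by positivity),
    integral_const_mul, integral_exp_mul_Ioi (neg_neg_of_pos hr)]
  congr 1
  field_simp

lemma lintegral_Iic_ofReal_mul_exp_mul {C r : ℝ} (hC : 0 ≤ C) (hr : 0 < r) (c : ℝ) :
    ∫⁻ x in Iic c, ENNReal.ofReal (C * exp (r * x)) = ENNReal.ofReal (C / r * exp (r * c)) := by
  rw [← ofReal_integral_eq_lintegral_ofReal ((integrableOn_exp_mul_Iic hr c).const_mul C)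
      (ae_of_all _ fun x => by positivity),
    integral_const_mul, integral_exp_mul_Iic hr, mul_div_assoc', div_mul_eq_mul_div]

lemma lintegral_Ioi_le_of_le_mul_exp_neg_mul {f : ℝ → ℝ} {C r : ℝ} (hC : 0 ≤ C) (hr : 0 < r)
    (hf : ∀ x, f x ≤ C * exp (-r * x)) (c : ℝ) :
    ∫⁻ x in Ioi c, ENNReal.ofReal (f x) ≤ ENNReal.ofReal (C / r * exp (-r * c)) :=
  (lintegral_mono fun x => ENNReal.ofReal_le_ofReal (hf x)).trans_eq
    (lintegral_Ioi_ofReal_mul_exp_neg_mul hC hr c)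

def HasExpDecay (r : ℝ) (f : ℝ → ℝ) : Prop := ∃ C, 0 ≤ C ∧ ∀ x, f x ≤ C * exp (-r * x)

def HasExpSaturation (r : ℝ) (f : ℝ → ℝ) : Prop := ∃ C, 0 ≤ C ∧ ∀ x, 1 - f x ≤ C * exp (r * x)

lemma HasExpDecay.lintegral_Ioi_lt_top {r : ℝ} {f : ℝ → ℝ} (hf : HasExpDecay r f) (hr : 0 < r)
    (c : ℝ) : ∫⁻ x in Ioi c, ENNReal.ofReal (f x) < ⊤ := by
  obtain ⟨C, hC, hfC⟩ := hf
  exact (lintegral_Ioi_le_of_le_mul_exp_neg_mul hC hr hfC c).trans_lt ENNReal.ofReal_lt_top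

lemma hasExpDecay_Tmap_of_le {f : ℝ → ℝ} {m b : ℝ} (hm : 0 ≤ m) (hf : ∀ v ≤ b, m ≤ f v) :
    HasExpDecay m (Tmap f) := by
  refine ⟨exp (-m * b), (exp_pos _).le, fun x => ?_⟩
  have hI : ENNReal.ofReal (m * (x + b)) ≤ tailLIntegral f x :=
    calc ENNReal.ofReal (m * (x + b)) = ∫⁻ _ in Ioc (-x) b, ENNReal.ofReal m := by
          rw [setLIntegral_const, Real.volume_Ioc, ← ENNReal.ofReal_mul hm, sub_neg_eq_add,
            add_comm b]
      _ ≤ ∫⁻ v in Ioc (-x) b, ENNReal.ofReal (f v) :=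
          setLIntegral_mono' measurableSet_Ioc fun v hv => ENNReal.ofReal_le_ofReal (hf v hv.2)
      _ ≤ tailLIntegral f x := lintegral_mono_set Ioc_subset_Ioi_self
  calc Tmap f x ≤ exp (-(m * (x + b))) := Tmap_le_exp_neg hI
    _ = exp (-m * b) * exp (-m * x) := by rw [← exp_add]; ring_nf

lemma HasExpDecay.hasExpSaturation_Tmap {r : ℝ} {f : ℝ → ℝ} (hf : HasExpDecay r f) (hr : 0 < r) :
    HasExpSaturation r (Tmap f) := by
  obtain ⟨C, hC, hfC⟩ := hf
  refine ⟨C / r, by positivity, fun x => one_sub_Tmap_le (by positivity) ?_⟩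
  exact (lintegral_Ioi_le_of_le_mul_exp_neg_mul hC hr hfC (-x)).trans_eq (by rw [neg_mul_neg])

lemma HasExpSaturation.hasExpDecay_Tmap {r : ℝ} {f : ℝ → ℝ} (hf : HasExpSaturation r f)
    (hr : 0 < r) : HasExpDecay 1 (Tmap f) := by
  obtain ⟨C, hC, hfC⟩ := hf
  set g : ℝ → ℝ≥0∞ := fun v => ENNReal.ofReal (C * exp (r * v))
  have hg : Measurable g := by fun_prop
  refine ⟨exp (C / r), (exp_pos _).le, fun x => ?_⟩
  have hI : ENNReal.ofReal (x - C / r) ≤ tailLIntegral f x :=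
    calc ENNReal.ofReal (x - C / r)
        = (∫⁻ _ in Ioc (-x) 0, 1) - ∫⁻ v in Iic 0, g v := by
          rw [ENNReal.ofReal_sub _ (by positivity), setLIntegral_one, Real.volume_Ioc,
            lintegral_Iic_ofReal_mul_exp_mul hC hr, mul_zero, exp_zero, mul_one, zero_sub, neg_neg]
      _ ≤ (∫⁻ _ in Ioc (-x) 0, 1) - ∫⁻ v in Ioc (-x) 0, g v :=
          tsub_le_tsub_left (lintegral_mono_set Ioc_subset_Iic_self) _
      _ ≤ ∫⁻ v in Ioc (-x) 0, (1 - g v) := lintegral_sub_le _ _ hg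
      _ ≤ ∫⁻ v in Ioc (-x) 0, ENNReal.ofReal (f v) := lintegral_mono fun v => by
          rw [← ENNReal.ofReal_one, ← ENNReal.ofReal_sub _ (by positivity)]
          exact ENNReal.ofReal_le_ofReal (by linarith [hfC v])
      _ ≤ tailLIntegral f x := lintegral_mono_set Ioc_subset_Ioi_self
  calc Tmap f x ≤ exp (-(x - C / r)) := Tmap_le_exp_neg hI
    _ = exp (C / r) * exp (-1 * x) := by rw [← exp_add]; ring_nf

lemma exists_mul_exp_neg_le_Tmap {f : ℝ → ℝ} (hf1 : ∀ x, f x ≤ 1)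
    (hf : ∫⁻ x in Ioi 0, ENNReal.ofReal (f x) < ⊤) :
    ∃ a > 0, ∀ x, 0 ≤ x → a * exp (-x) ≤ Tmap f x := by
  set K := (∫⁻ x in Ioi 0, ENNReal.ofReal (f x)).toReal
  refine ⟨exp (-K), exp_pos _, fun x hx => ?_⟩
  have hI : tailLIntegral f x ≤ ENNReal.ofReal (x + K) :=
    calc tailLIntegral f x
        ≤ (∫⁻ v in Ioc (-x) 0, ENNReal.ofReal (f v)) + ∫⁻ v in Ioi 0, ENNReal.ofReal (f v) := by
          rw [tailLIntegral, ← Ioc_union_Ioi_eq_Ioi (neg_nonpos.2 hx)]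
          exact lintegral_union_le _ _ _
      _ ≤ (∫⁻ _ in Ioc (-x) 0, 1) + ENNReal.ofReal K := by
          rw [ENNReal.ofReal_toReal hf.ne]
          gcongr with v
          exact ENNReal.ofReal_le_one.2 (hf1 v)
      _ = ENNReal.ofReal (x + K) := by
          rw [setLIntegral_one, Real.volume_Ioc, zero_sub, neg_neg,
            ENNReal.ofReal_add hx ENNReal.toReal_nonneg]
  calc exp (-K) * exp (-x) = exp (-(x + K)) := by rw [← exp_add]; ring_nf
    _ ≤ Tmap f x := exp_neg_le_Tmap (by positivity) hI

lemma exists_mul_exp_le_one_sub_Tmap {f : ℝ → ℝ} {a : ℝ} (ha : 0 < a)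
    (hfa : ∀ x, 0 ≤ x → a * exp (-x) ≤ f x) (hf : ∫⁻ x in Ioi 0, ENNReal.ofReal (f x) < ⊤) :
    ∃ b > 0, ∀ x ≤ 0, b * exp x ≤ 1 - Tmap f x := by
  set K := (∫⁻ x in Ioi 0, ENNReal.ofReal (f x)).toReal
  refine ⟨a * exp (-K), by positivity, fun x hx => ?_⟩
  have hlow : ENNReal.ofReal (a * exp x) ≤ tailLIntegral f x :=
    calc ENNReal.ofReal (a * exp x) = ∫⁻ u in Ioi (-x), ENNReal.ofReal (a * exp (-1 * u)) := by
          rw [lintegral_Ioi_ofReal_mul_exp_neg_mul ha.le one_pos]; ring_nf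
      _ ≤ tailLIntegral f x := setLIntegral_mono' measurableSet_Ioi fun u hu =>
          ENNReal.ofReal_le_ofReal (by simpa using hfa u (by linarith [mem_Ioi.1 hu]))
  have hup : tailLIntegral f x ≤ ENNReal.ofReal K := by
    rw [ENNReal.ofReal_toReal hf.ne]
    simpa [tailLIntegral] using tailLIntegral_mono f hx
  calc a * exp (-K) * exp x = a * exp x * exp (-K) := by ring
    _ ≤ 1 - Tmap f x := mul_exp_neg_le_one_sub_Tmap ENNReal.toReal_nonneg hup hlow

lemma Fstar_anti : Antitone Fstar := fun _ _ hxy =>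
  one_div_le_one_div_of_le (by positivity) (by gcongr)

lemma Fstar_neg (x : ℝ) : Fstar (-x) = 1 - Fstar x := by
  rw [Fstar, Fstar, exp_neg]
  field_simp
  ring

lemma le_Fstar_add_iff {g x M : ℝ} : Fstar (x + M) ≤ g ↔ 1 - g ≤ g * (exp x * exp M) := by
  rw [Fstar, div_le_iff₀ (by positivity), ← exp_add]
  constructor <;> intro h <;> linarith

lemma exists_Fstar_add_le {g : ℝ → ℝ} {a : ℝ} (hg : Antitone g) (hsat : HasExpSaturation 1 g)
    (ha : 0 < a) (hga : ∀ x, 0 ≤ x → a * exp (-x) ≤ g x) : ∃ M, ∀ x, Fstar (x + M) ≤ g x := by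
  obtain ⟨B, -, hB⟩ := hsat
  obtain ⟨M, hM⟩ : ∃ M, a * exp M = max 1 B :=
    ⟨log (max 1 B / a), by rw [exp_log (by positivity)]; field_simp⟩
  refine ⟨M, fun x => le_Fstar_add_iff.2 ?_⟩
  rcases le_total 0 x with hx | hx
  · have hgx := hga x hx
    calc 1 - g x ≤ 1 := by linarith [mul_pos ha (exp_pos (-x))]
      _ ≤ a * exp M := hM ▸ le_max_left _ _
      _ = a * exp (-x) * (exp x * exp M) := by
          rw [mul_assoc, ← mul_assoc (exp (-x)), ← exp_add, neg_add_cancel, exp_zero, one_mul]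
      _ ≤ g x * (exp x * exp M) := by gcongr
  · have hg0 : a ≤ g x := by simpa using (hga 0 le_rfl).trans (hg hx)
    calc 1 - g x ≤ B * exp x := by simpa using hB x
      _ ≤ a * exp M * exp x := by rw [hM]; gcongr; exact le_max_right _ _
      _ ≤ g x * (exp x * exp M) := by rw [mul_right_comm, mul_assoc]; gcongr

lemma exists_Fstar_sandwich {g : ℝ → ℝ} {a b : ℝ} (hg : Antitone g)
    (hdecay : HasExpDecay 1 g) (hsat : HasExpSaturation 1 g)
    (ha : 0 < a) (hga : ∀ x, 0 ≤ x → a * exp (-x) ≤ g x)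
    (hb : 0 < b) (hgb : ∀ x ≤ 0, b * exp x ≤ 1 - g x) :
    ∃ M, 0 ≤ M ∧ ∀ x, Fstar (x + M) ≤ g x ∧ g x ≤ Fstar (x - M) := by
  obtain ⟨M₁, hM₁⟩ := exists_Fstar_add_le hg hsat ha hga
  -- the upper bound is the lower bound for the reflection `y ↦ 1 - g (-y)`
  have hrefl : Antitone fun y => 1 - g (-y) := fun _ _ hxy =>
    sub_le_sub_left (hg (neg_le_neg hxy)) 1
  obtain ⟨C, hC, hgC⟩ := hdecay
  obtain ⟨M₂, hM₂⟩ := exists_Fstar_add_le hrefl ⟨C, hC, fun y => by simpa using hgC (-y)⟩ hb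
    fun y hy => by simpa using hgb (-y) (neg_nonpos.2 hy)
  refine ⟨max (max M₁ M₂) 0, le_max_right _ _, fun x => ⟨?_, ?_⟩⟩
  · exact (Fstar_anti (by gcongr; exact (le_max_left _ _).trans (le_max_left _ _))).trans (hM₁ x)
  · have h := hM₂ (-x)
    rw [neg_add_eq_sub, ← neg_sub, Fstar_neg, neg_neg] at h
    exact (by linarith : g x ≤ Fstar (x - M₂)).trans
      (Fstar_anti (by gcongr; exact (le_max_right _ _).trans (le_max_left _ _)))

theorem hat_T4_bounded_general (F : ℝ → ℝ) (hanti : Antitone F)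
    (hr : ∀ x, F x ∈ Icc (0:ℝ) 1) (hne : ∃ x, F x ≠ 0)
    (hint : (∫⁻ u in Ioi (0:ℝ), ENNReal.ofReal (F u)) < ⊤) :
    ∃ M : ℝ, 0 ≤ M ∧ ∀ x, Fstar (x + M) ≤ Tmap^[4] F x ∧ Tmap^[4] F x ≤ Fstar (x - M) := by
  obtain ⟨x₀, hx₀⟩ := hne
  have hc : 0 < F x₀ := lt_of_le_of_ne (hr x₀).1 (Ne.symm hx₀)
  obtain ⟨m, hm, hTF⟩ := exists_mul_exp_neg_le_Tmap (fun x => (hr x).2) hint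
  have d₁ : HasExpDecay (F x₀) (Tmap F) := hasExpDecay_Tmap_of_le hc.le fun v hv => hanti hv
  have d₂ : HasExpDecay m (Tmap^[2] F) :=
    hasExpDecay_Tmap_of_le hm.le fun v hv => by simpa using (hTF 0 le_rfl).trans (Tmap_anti F hv)
  have s₂ : HasExpSaturation (F x₀) (Tmap^[2] F) := d₁.hasExpSaturation_Tmap hc
  have d₃ : HasExpDecay 1 (Tmap^[3] F) := s₂.hasExpDecay_Tmap hc
  have s₃ : HasExpSaturation m (Tmap^[3] F) := d₂.hasExpSaturation_Tmap hm
  obtain ⟨a₃, ha₃, hT₃⟩ := exists_mul_exp_neg_le_Tmap (Tmap_le_one _) (d₂.lintegral_Ioi_lt_top hm 0)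
  obtain ⟨a₄, ha₄, hT₄⟩ :=
    exists_mul_exp_neg_le_Tmap (Tmap_le_one _) (d₃.lintegral_Ioi_lt_top one_pos 0)
  obtain ⟨b₄, hb₄, hT₄'⟩ :=
    exists_mul_exp_le_one_sub_Tmap ha₃ hT₃ (d₃.lintegral_Ioi_lt_top one_pos 0)
  exact exists_Fstar_sandwich (Tmap_anti _) (s₃.hasExpDecay_Tmap hm)
    (d₃.hasExpSaturation_Tmap one_pos) ha₄ hT₄ hb₄ hT₄'

theorem hat_T4_bounded (F : ℝ → ℝ) (hmeas : Measurable F) (hanti : Antitone F)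
    (hr : ∀ x, F x ∈ Icc (0:ℝ) 1) (hne : ∃ x, F x ≠ 0)
    (hint : (∫⁻ u in Ioi (0:ℝ), ENNReal.ofReal (F u)) < ⊤) :
    ∃ M : ℝ, 0 ≤ M ∧ ∀ x, Fstar (x + M) ≤ Tmap^[4] F x ∧ Tmap^[4] F x ≤ Fstar (x - M) :=
  hat_T4_bounded_general F hanti hr hne hint
end

section
/- Asymptotics of one application of T: let F : ℝ → [0,1] be non-increasing, not identically 0, with ∫_0^∞ F < ∞. Then there exist α, β > 0 such that TF(x) = O(e^{-αx}) and TF(x) = Ω(e^{-βx}) as x → +∞, and TF(x) = 1 - Θ(∫_{-x}^∞ F) as x → -∞, where (TF)(x) = exp(-∫_{-x}^∞ F(u) du). -/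
open MeasureTheory Set Filter

/-!
Write `G(x) = ∫_{-x}^∞ F`, so that `TF = exp (-G)`. Since `F ≤ 1` and `F` is integrable at `+∞`,
`G(x) ≤ x + G(0)`; since `F` is antitone and `F(x₀) > 0`, `G(x) ≥ F(x₀) (x + x₀)`. Exponentiating
gives the two exponential bounds at `+∞`. At `-∞`, `G` stays in `[0, G(0)]`, and on a bounded
interval `1 - exp (-t)` is comparable to `t`.
-/

open Asymptotics Real

theorem Real.mul_exp_neg_le_one_sub_exp_neg (t : ℝ) : t * exp (-t) ≤ 1 - exp (-t) := by
  have h := mul_le_mul_of_nonneg_right (add_one_le_exp t) (exp_pos (-t)).le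
  rw [← exp_add, add_neg_cancel, exp_zero] at h
  linarith

theorem Asymptotics.isTheta_one_sub_exp_neg {α : Type*} {l : Filter α} {g : α → ℝ} {M : ℝ}
    (hg : ∀ᶠ x in l, g x ∈ Icc 0 M) : (fun x => 1 - exp (-g x)) =Θ[l] g := by
  have hpos : ∀ t : ℝ, 0 ≤ t → 0 ≤ 1 - exp (-t) := fun t ht => by
    linarith [exp_le_one_iff.2 (neg_nonpos.2 ht)]
  constructor
  · refine IsBigO.of_bound 1 (hg.mono fun x hx => ?_)
    rw [norm_of_nonneg (hpos _ hx.1), norm_of_nonneg hx.1, one_mul]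
    linarith [one_sub_le_exp_neg (g x)]
  · refine IsBigO.of_bound (exp M) (hg.mono fun x hx => ?_)
    rw [norm_of_nonneg (hpos _ hx.1), norm_of_nonneg hx.1]
    calc g x = exp M * (g x * exp (-M)) := by rw [exp_neg]; field_simp
      _ ≤ exp M * (g x * exp (-g x)) := by gcongr; exacts [hx.1, hx.2]
      _ ≤ exp M * (1 - exp (-g x)) := by gcongr; exact mul_exp_neg_le_one_sub_exp_neg _

section TailIntegral

variable {F : ℝ → ℝ}

theorem lintegral_Ioi_le_add_lintegral_Ioi (hF : ∀ u, F u ≤ 1) (a b : ℝ) :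
    ∫⁻ u in Ioi a, ENNReal.ofReal (F u) ≤
      ENNReal.ofReal (b - a) + ∫⁻ u in Ioi b, ENNReal.ofReal (F u) :=
  calc ∫⁻ u in Ioi a, ENNReal.ofReal (F u)
      ≤ ∫⁻ u in Ioc a b ∪ Ioi b, ENNReal.ofReal (F u) := lintegral_mono_set Ioi_subset_Ioc_union_Ioi
    _ ≤ (∫⁻ u in Ioc a b, ENNReal.ofReal (F u)) + ∫⁻ u in Ioi b, ENNReal.ofReal (F u) :=
        lintegral_union_le _ _ _
    _ ≤ (∫⁻ _ in Ioc a b, 1) + ∫⁻ u in Ioi b, ENNReal.ofReal (F u) := by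
        gcongr with u; exact ENNReal.ofReal_le_one.2 (hF u)
    _ = ENNReal.ofReal (b - a) + ∫⁻ u in Ioi b, ENNReal.ofReal (F u) := by
        rw [setLIntegral_one, Real.volume_Ioc]

theorem lintegral_Ioi_ne_top (hF : ∀ u, F u ≤ 1) {b : ℝ}
    (hb : ∫⁻ u in Ioi b, ENNReal.ofReal (F u) ≠ ⊤) (a : ℝ) :
    ∫⁻ u in Ioi a, ENNReal.ofReal (F u) ≠ ⊤ :=
  ne_top_of_le_ne_top (ENNReal.add_ne_top.2 ⟨ENNReal.ofReal_ne_top, hb⟩)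
    (lintegral_Ioi_le_add_lintegral_Ioi hF a b)

theorem ofReal_mul_le_lintegral_Ioi (hF : Antitone F) (a b : ℝ) :
    ENNReal.ofReal (F b) * ENNReal.ofReal (b - a) ≤ ∫⁻ u in Ioi a, ENNReal.ofReal (F u) :=
  calc ENNReal.ofReal (F b) * ENNReal.ofReal (b - a)
      = ∫⁻ _ in Ioc a b, ENNReal.ofReal (F b) := by rw [setLIntegral_const, Real.volume_Ioc]
    _ ≤ ∫⁻ u in Ioc a b, ENNReal.ofReal (F u) :=
        setLIntegral_mono' measurableSet_Ioc fun u hu => ENNReal.ofReal_le_ofReal (hF hu.2)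
    _ ≤ ∫⁻ u in Ioi a, ENNReal.ofReal (F u) := lintegral_mono_set Ioc_subset_Ioi_self

theorem toReal_lintegral_Ioi_le (hF : ∀ u, F u ≤ 1) {a b : ℝ} (hab : a ≤ b)
    (hb : ∫⁻ u in Ioi b, ENNReal.ofReal (F u) ≠ ⊤) :
    (∫⁻ u in Ioi a, ENNReal.ofReal (F u)).toReal ≤
      b - a + (∫⁻ u in Ioi b, ENNReal.ofReal (F u)).toReal := by
  have h := ENNReal.toReal_mono (ENNReal.add_ne_top.2 ⟨ENNReal.ofReal_ne_top, hb⟩)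
    (lintegral_Ioi_le_add_lintegral_Ioi hF a b)
  rwa [ENNReal.toReal_add ENNReal.ofReal_ne_top hb, ENNReal.toReal_ofReal (sub_nonneg.2 hab)] at h

theorem mul_le_toReal_lintegral_Ioi (hF : Antitone F) {a b : ℝ} (hFb : 0 ≤ F b) (hab : a ≤ b)
    (ha : ∫⁻ u in Ioi a, ENNReal.ofReal (F u) ≠ ⊤) :
    F b * (b - a) ≤ (∫⁻ u in Ioi a, ENNReal.ofReal (F u)).toReal := by
  have h := ENNReal.toReal_mono ha (ofReal_mul_le_lintegral_Ioi hF a b)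
  rwa [ENNReal.toReal_mul, ENNReal.toReal_ofReal hFb, ENNReal.toReal_ofReal (sub_nonneg.2 hab)] at h

end TailIntegral

theorem Tmap_asymptotics_general (F : ℝ → ℝ) (hanti : Antitone F)
    (hr : ∀ x, F x ∈ Icc (0:ℝ) 1) (hne : ∃ x, F x ≠ 0)
    (hint : (∫⁻ u in Ioi (0:ℝ), ENNReal.ofReal (F u)) < ⊤) :
    (∃ α > (0:ℝ), ∃ β > (0:ℝ),
      (Tmap F) =O[atTop] (fun x => Real.exp (-α * x)) ∧
      (fun x => Real.exp (-β * x)) =O[atTop] (Tmap F)) ∧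
    (fun x => 1 - Tmap F x) =Θ[atBot]
      (fun x => ((∫⁻ u in Ioi (-x), ENNReal.ofReal (F u)).toReal)) := by
  have hF1 : ∀ u, F u ≤ 1 := fun u => (hr u).2
  set G : ℝ → ℝ := fun x => (∫⁻ u in Ioi (-x), ENNReal.ofReal (F u)).toReal
  have hfin := lintegral_Ioi_ne_top hF1 hint.ne
  have hT : Tmap F = fun x => exp (-G x) := funext fun x => if_neg (hfin _)
  obtain ⟨x₀, hx₀⟩ := hne
  have hc : 0 < F x₀ := (hr x₀).1.lt_of_ne' hx₀
  refine ⟨⟨F x₀, hc, 1, one_pos, ?_, ?_⟩, ?_⟩ <;> simp only [hT]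
  · refine isBigO_exp_comp_exp_comp.2 (isBoundedUnder_of_eventually_le (a := -(F x₀ * x₀)) ?_)
    filter_upwards [eventually_ge_atTop (-x₀)] with x hx
    have := mul_le_toReal_lintegral_Ioi hanti (hr x₀).1 (neg_le.1 hx) (hfin _)
    simp only [Pi.sub_apply]
    linarith
  · refine isBigO_exp_comp_exp_comp.2 (isBoundedUnder_of_eventually_le (a := G 0) ?_)
    filter_upwards [eventually_ge_atTop 0] with x hx
    have := toReal_lintegral_Ioi_le hF1 (neg_nonpos.2 hx) (hfin 0)
    simp only [Pi.sub_apply, G, neg_zero] at this ⊢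
    linarith
  · refine isTheta_one_sub_exp_neg (M := G 0) ?_
    filter_upwards [eventually_le_atBot 0] with x hx
    exact ⟨ENNReal.toReal_nonneg,
      ENNReal.toReal_mono (hfin _) (lintegral_mono_set (Ioi_subset_Ioi (by simpa using hx)))⟩

theorem Tmap_asymptotics (F : ℝ → ℝ) (hmeas : Measurable F) (hanti : Antitone F)
    (hr : ∀ x, F x ∈ Icc (0:ℝ) 1) (hne : ∃ x, F x ≠ 0)
    (hint : (∫⁻ u in Ioi (0:ℝ), ENNReal.ofReal (F u)) < ⊤) :
    (∃ α > (0:ℝ), ∃ β > (0:ℝ),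
      (Tmap F) =O[atTop] (fun x => Real.exp (-α * x)) ∧
      (fun x => Real.exp (-β * x)) =O[atTop] (Tmap F)) ∧
    (fun x => 1 - Tmap F x) =Θ[atBot]
      (fun x => ((∫⁻ u in Ioi (-x), ENNReal.ofReal (F u)).toReal)) :=
  Tmap_asymptotics_general F hanti hr hne hint
end
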